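/- There exists a constant c₂ > 0 depending only on n and p (and in particular independent of γ₁ and γ₂) such that for every p-potential F with constants γ₁, γ₂ and induced extra stress S, and for all symmetric matrices B, C ∈ M^{n×n}, one has |S(B) − S(C)| ≤ c₂ γ₂ (1 + |B|² + |C|²)^{(p−2)/2} |B − C|. -/

import Mathlib

open scoped BigOperators

noncomputable section

/-- Frobenius inner product on `n × n` real matrices (represented as functions). -/
def frobInner {n : ℕ} (A B : Fin n → Fin n → ℝ) : ℝ := ∑ i, ∑ j, A i j * B i j

/-- Frobenius norm. -/
def frobNorm {n : ℕ} (A : Fin n → Fin n → ℝ) : ℝ := Real.sqrt (frobInner A A)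

/-- A symmetric matrix. -/
def IsSymmMat {n : ℕ} (A : Fin n → Fin n → ℝ) : Prop := ∀ i j, A i j = A j i

/-- The induced potential `Φ(B) = F(|B|)`. -/
def inducedPot {n : ℕ} (F : ℝ → ℝ) (B : Fin n → Fin n → ℝ) : ℝ := F (frobNorm B)

/-- The extra stress induced by `F`: `S(B) = F'(|B|) B / |B|` for `B ≠ 0`, `S(0) = 0`. -/
def stress {n : ℕ} (F : ℝ → ℝ) (B : Fin n → Fin n → ℝ) : Fin n → Fin n → ℝ :=
  if B = 0 then 0 else (deriv F (frobNorm B) / frobNorm B) • B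

/-- `F` is a `p`-potential with constants `γ₁, γ₂ > 0`. -/
structure IsPPotential (n : ℕ) (p γ₁ γ₂ : ℝ) (F : ℝ → ℝ) : Prop where
  convex : ConvexOn ℝ (Set.Ici (0 : ℝ)) F
  smooth : ContDiffOn ℝ 2 F (Set.Ici (0 : ℝ))
  nonneg : ∀ x : ℝ, 0 ≤ x → 0 ≤ F x
  zero : F 0 = 0
  deriv_zero : deriv F 0 = 0
  gamma₁_pos : 0 < γ₁
  gamma₂_pos : 0 < γ₂
  lower : ∀ B C : Fin n → Fin n → ℝ, IsSymmMat B → IsSymmMat C →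
    γ₁ * (1 + frobNorm B ^ 2) ^ ((p - 2) / 2) * frobNorm C ^ 2 ≤
      iteratedFDeriv ℝ 2 (inducedPot F) B ![C, C]
  upper : ∀ B C D : Fin n → Fin n → ℝ, IsSymmMat B → IsSymmMat C → IsSymmMat D →
    |iteratedFDeriv ℝ 2 (inducedPot F) B ![C, D]| ≤
      γ₂ * (1 + frobNorm B ^ 2) ^ ((p - 2) / 2) * frobNorm C * frobNorm D

/-!
Restricting `Φ` to the line `t ↦ t • E` through a symmetric unit matrix `E`, the two bounds on
`∇²Φ` become `0 ≤ F''(t) ≤ γ₂ (1 + t²)^((p-2)/2)` for `t > 0`. The lower bound at `B = 0` forces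
`∇Φ` to be differentiable, hence continuous, at `0`, where it vanishes because `Φ` is minimal
there; so `F'(0+) = 0`. Integrating `F''` gives `0 ≤ F'(t) ≤ p/(p-1) γ₂ t (1 + t²)^((p-2)/2)`,
and on `[b, c]` with `c ≤ 2b` a Lipschitz bound for `F'` with weight `(1 + c²)^((p-2)/2)`.
Read in `ℝ^(n×n)`, the stress is the radial map `x ↦ F'(‖x‖) x / ‖x‖`. For `‖x‖ ≤ ‖y‖ ≤ 2‖x‖`
split `S(x) - S(y) = F'(‖y‖)/‖y‖ (x - y) + (F'(‖x‖)/‖x‖ - F'(‖y‖)/‖y‖) x`; for `2‖x‖ ≤ ‖y‖`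
bound both stresses by `F'(‖y‖) ≤ 2 p/(p-1) γ₂ (1 + ‖y‖²)^((p-2)/2) ‖x - y‖`.
-/

open Set Filter Topology

section Frobenius

def frobEquiv (n : ℕ) : (Fin n → Fin n → ℝ) ≃L[ℝ] EuclideanSpace ℝ (Fin n × Fin n) :=
  ((LinearEquiv.curry ℝ ℝ (Fin n) (Fin n)).symm.trans
    (WithLp.linearEquiv 2 ℝ _).symm).toContinuousLinearEquiv

variable {n : ℕ}

@[simp] lemma frobEquiv_apply (A : Fin n → Fin n → ℝ) (ij : Fin n × Fin n) :
    frobEquiv n A ij = A ij.1 ij.2 := rfl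

lemma frobNorm_eq_norm (A : Fin n → Fin n → ℝ) : frobNorm A = ‖frobEquiv n A‖ := by
  rw [EuclideanSpace.norm_eq, frobNorm, frobInner, Fintype.sum_prod_type]
  simp [Real.norm_eq_abs, sq]

lemma frobNorm_nonneg (A : Fin n → Fin n → ℝ) : 0 ≤ frobNorm A := Real.sqrt_nonneg _

lemma frobNorm_zero : frobNorm (0 : Fin n → Fin n → ℝ) = 0 := by simp [frobNorm, frobInner]

lemma frobNorm_smul (s : ℝ) (A : Fin n → Fin n → ℝ) : frobNorm (s • A) = |s| * frobNorm A := by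
  rw [frobNorm_eq_norm, frobNorm_eq_norm, map_smul, norm_smul, Real.norm_eq_abs]

lemma IsSymmMat.smul {A : Fin n → Fin n → ℝ} (hA : IsSymmMat A) (s : ℝ) : IsSymmMat (s • A) :=
  fun i j => by simp [hA i j]

lemma ne_zero_of_frobNorm_eq_one {E : Fin n → Fin n → ℝ} (hE : frobNorm E = 1) : E ≠ 0 := by
  rintro rfl
  simp [frobNorm_zero] at hE

lemma exists_isSymmMat_frobNorm_eq_one (hn : 1 ≤ n) :
    ∃ E : Fin n → Fin n → ℝ, IsSymmMat E ∧ frobNorm E = 1 := by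
  let i : Fin n := ⟨0, hn⟩
  refine ⟨(frobEquiv n).symm (EuclideanSpace.single (i, i) 1), fun a b => ?_, ?_⟩
  · simp [frobEquiv, Pi.single_apply, Prod.ext_iff, and_comm]
  · rw [frobNorm_eq_norm, ContinuousLinearEquiv.apply_symm_apply, PiLp.norm_single, norm_one]

end Frobenius

section Scalar

variable {f : ℝ → ℝ}

lemma le_mul_rpow_of_deriv_le {c e t : ℝ} (hf : DifferentiableOn ℝ f (Ioi 0))
    (hf0 : Tendsto f (𝓝[>] 0) (𝓝 0)) (hc : 0 ≤ c) (ht : 0 < t)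
    (hbound : ∀ s ∈ Ioo 0 t, deriv f s ≤ c * e * s ^ (e - 1)) :
    f t ≤ c * t ^ e := by
  have hderiv : ∀ s > 0,
      HasDerivAt (fun s => c * s ^ e - f s) (c * (e * s ^ (e - 1)) - deriv f s) s := fun s hs =>
    ((Real.hasDerivAt_rpow_const (Or.inl hs.ne')).const_mul c).sub
      (hf.differentiableAt (Ioi_mem_nhds hs)).hasDerivAt
  have hmono : MonotoneOn (fun s => c * s ^ e - f s) (Ioc 0 t) := by
    refine monotoneOn_of_hasDerivWithinAt_nonneg
      (f' := fun s => c * (e * s ^ (e - 1)) - deriv f s) (convex_Ioc 0 t)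
      (fun s hs => (hderiv s hs.1).continuousAt.continuousWithinAt) ?_ ?_
    · rw [interior_Ioc]
      exact fun s hs => (hderiv s hs.1).hasDerivWithinAt
    · rw [interior_Ioc]
      intro s hs
      linarith [hbound s hs]
  have hle : ∀ ε ∈ Ioo 0 t, f t ≤ c * t ^ e + f ε := fun ε hε => by
    have := hmono ⟨hε.1, hε.2.le⟩ ⟨ht, le_rfl⟩ hε.2.le
    have : 0 ≤ c * ε ^ e := mul_nonneg hc (Real.rpow_nonneg hε.1.le e)
    linarith
  have hlim : Tendsto (fun ε => c * t ^ e + f ε) (𝓝[>] 0) (𝓝 (c * t ^ e)) := by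
    simpa using tendsto_const_nhds.add hf0
  exact ge_of_tendsto hlim (eventually_of_mem (Ioo_mem_nhdsGT ht) hle)

lemma one_add_sq_rpow_le_of_nonpos {q s t : ℝ} (hq : q ≤ 0) (hs : 0 < s) (hst : s ≤ t) :
    (1 + s ^ 2) ^ q ≤ (1 + t ^ 2) ^ q * (s / t) ^ (2 * q) := by
  have ht : 0 < t := hs.trans_le hst
  have hle : (1 + t ^ 2) * (s / t) ^ 2 ≤ 1 + s ^ 2 := by
    rw [div_pow, mul_div_assoc', div_le_iff₀ (by positivity)]
    nlinarith [mul_le_mul hst hst hs.le ht.le]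
  calc (1 + s ^ 2) ^ q ≤ ((1 + t ^ 2) * (s / t) ^ 2) ^ q :=
        Real.rpow_le_rpow_of_nonpos (by positivity) hle hq
    _ = (1 + t ^ 2) ^ q * (s / t) ^ (2 * q) := by
        rw [Real.mul_rpow (by positivity) (by positivity), Real.rpow_mul (by positivity),
          Real.rpow_two]

lemma le_of_deriv_le_one_add_sq_rpow {p γ t : ℝ} (hp : 1 < p) (hγ : 0 ≤ γ)
    (hf : DifferentiableOn ℝ f (Ioi 0)) (hf0 : Tendsto f (𝓝[>] 0) (𝓝 0))
    (hf' : ∀ s > 0, deriv f s ≤ γ * (1 + s ^ 2) ^ ((p - 2) / 2)) (ht : 0 < t) :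
    f t ≤ p / (p - 1) * t * (γ * (1 + t ^ 2) ^ ((p - 2) / 2)) := by
  set q := (p - 2) / 2
  have hp1 : 0 < p - 1 := by linarith
  have hw : 0 ≤ γ * (1 + t ^ 2) ^ q := by positivity
  rcases le_or_gt 2 p with hp2 | hp2
  · -- `q ≥ 0`: on `(0, t)` the weight is at most its value at `t`
    have hft := le_mul_rpow_of_deriv_le hf hf0 hw ht (e := 1) fun s hs => by
      rw [sub_self, Real.rpow_zero, mul_one, mul_one]
      refine (hf' s hs.1).trans (mul_le_mul_of_nonneg_left ?_ hγ)
      exact Real.rpow_le_rpow (by positivity) (by nlinarith [hs.1, hs.2]) (by simp [q]; linarith)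
    rw [Real.rpow_one] at hft
    have hK : 1 ≤ p / (p - 1) := by rw [le_div_iff₀ hp1]; linarith
    nlinarith [mul_nonneg hw ht.le]
  · -- `q < 0`: `(1 + s²)^q ≤ (1 + t²)^q (s/t)^(p-2)` on `(0, t)`, and `s^(p-2)` integrates to
    -- `s^(p-1)/(p-1)`
    have hq : q ≤ 0 := by simp only [q]; linarith
    set c := γ * (1 + t ^ 2) ^ q / t ^ (p - 2) / (p - 1)
    have hft := le_mul_rpow_of_deriv_le hf hf0 (e := p - 1) (c := c) (by positivity) ht
      fun s hs => by
        have := one_add_sq_rpow_le_of_nonpos hq hs.1 hs.2.le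
        rw [show 2 * q = p - 2 by ring, Real.div_rpow hs.1.le ht.le] at this
        calc deriv f s ≤ γ * (1 + s ^ 2) ^ q := hf' s hs.1
          _ ≤ γ * ((1 + t ^ 2) ^ q * (s ^ (p - 2) / t ^ (p - 2))) :=
              mul_le_mul_of_nonneg_left this hγ
          _ = c * (p - 1) * s ^ (p - 1 - 1) := by
              have : 0 < t ^ (p - 2) := Real.rpow_pos_of_pos ht _
              rw [show p - 1 - 1 = p - 2 by ring]
              simp only [c]
              field_simp
    have hct : c * t ^ (p - 1) = γ * t * (1 + t ^ 2) ^ q / (p - 1) := by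
      have : 0 < t ^ (p - 2) := Real.rpow_pos_of_pos ht _
      have htp : t ^ (p - 1) = t ^ (p - 2) * t := by rw [← Real.rpow_add_one ht.ne']; ring_nf
      simp only [c, htp]
      field_simp
    have hX : 0 ≤ γ * t * (1 + t ^ 2) ^ q := by positivity
    calc f t ≤ γ * t * (1 + t ^ 2) ^ q / (p - 1) := hct ▸ hft
      _ = 1 / (p - 1) * (γ * t * (1 + t ^ 2) ^ q) := by ring
      _ ≤ p / (p - 1) * (γ * t * (1 + t ^ 2) ^ q) := by gcongr
      _ = p / (p - 1) * t * (γ * (1 + t ^ 2) ^ q) := by ring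

lemma rpow_le_rpow_abs_mul_rpow {x y k q : ℝ} (hx : 0 < x) (hxy : x ≤ y) (hyk : y ≤ k * x) :
    x ^ q ≤ k ^ |q| * y ^ q := by
  have hy : 0 < y := hx.trans_le hxy
  have hk : 1 ≤ k := le_of_mul_le_mul_right (by linarith) hx
  rcases le_or_gt 0 q with hq | hq
  · calc x ^ q ≤ y ^ q := Real.rpow_le_rpow hx.le hxy hq
      _ ≤ k ^ |q| * y ^ q :=
        le_mul_of_one_le_left (Real.rpow_nonneg hy.le q) (Real.one_le_rpow hk (abs_nonneg q))
  · have hyk' : y / k ≤ x := by rwa [div_le_iff₀ (by linarith), mul_comm]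
    calc x ^ q ≤ (y / k) ^ q := Real.rpow_le_rpow_of_nonpos (by positivity) hyk' hq.le
      _ = k ^ |q| * y ^ q := by
        rw [Real.div_rpow hy.le (by linarith), abs_of_neg hq, Real.rpow_neg (by linarith),
          div_eq_mul_inv, mul_comm]

lemma one_add_sq_rpow_le_of_le_two_mul {q s c : ℝ} (hs : 0 ≤ s) (hsc : s ≤ c) (hcs : c ≤ 2 * s) :
    (1 + s ^ 2) ^ q ≤ 4 ^ |q| * (1 + c ^ 2) ^ q :=
  rpow_le_rpow_abs_mul_rpow (by positivity) (by nlinarith) (by nlinarith)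

lemma one_add_max_sq_rpow_le {q b c : ℝ} (hb : 0 ≤ b) (hc : 0 ≤ c) :
    (1 + max b c ^ 2) ^ q ≤ 2 ^ |q| * (1 + b ^ 2 + c ^ 2) ^ q := by
  refine rpow_le_rpow_abs_mul_rpow (by positivity) ?_ ?_ <;>
    rcases max_cases b c with ⟨h, _⟩ | ⟨h, _⟩ <;> rw [h] <;> nlinarith

end Scalar

section Radial

variable {V : Type*} [NormedAddCommGroup V] [NormedSpace ℝ V]

/-- This is `0` at `x = 0` whatever `φ 0` is, since `0 / 0 = 0`. -/
def radialMap (φ : ℝ → ℝ) (x : V) : V := (φ ‖x‖ / ‖x‖) • x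

variable {φ w : ℝ → ℝ} {A K : ℝ}

lemma norm_radialMap_le_of_norm_le (hφ : ∀ t > 0, 0 ≤ φ t) (hmono : MonotoneOn φ (Ioi 0))
    {x : V} {c : ℝ} (hc : 0 < c) (hx : ‖x‖ ≤ c) : ‖radialMap φ x‖ ≤ φ c := by
  rcases eq_or_ne x 0 with rfl | hx0
  · simpa [radialMap] using hφ c hc
  have hb : 0 < ‖x‖ := norm_pos_iff.mpr hx0
  rw [radialMap, norm_smul, Real.norm_eq_abs, abs_div, abs_norm, div_mul_cancel₀ _ hb.ne',
    abs_of_nonneg (hφ _ hb)]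
  exact hmono hb (hb.trans_le hx) hx

lemma norm_radialMap_sub_le_of_two_mul_le (hK : 0 ≤ K) (hw : ∀ t, 0 ≤ w t) (hφ : ∀ t > 0, 0 ≤ φ t)
    (hmono : MonotoneOn φ (Ioi 0)) (hgrowth : ∀ t > 0, φ t ≤ K * t * w t)
    {x y : V} (hy : 0 < ‖y‖) (hxy : 2 * ‖x‖ ≤ ‖y‖) :
    ‖radialMap φ x - radialMap φ y‖ ≤ 4 * K * w ‖y‖ * ‖x - y‖ := by
  have hy_le : ‖y‖ ≤ 2 * ‖x - y‖ := by
    linarith [norm_sub_norm_le y x, norm_sub_rev y x]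
  calc ‖radialMap φ x - radialMap φ y‖
      ≤ ‖radialMap φ x‖ + ‖radialMap φ y‖ := norm_sub_le _ _
    _ ≤ 2 * φ ‖y‖ := by
      linarith [norm_radialMap_le_of_norm_le hφ hmono hy (x := x) (by linarith [norm_nonneg x]),
        norm_radialMap_le_of_norm_le hφ hmono hy le_rfl (x := y)]
    _ ≤ 2 * (K * ‖y‖ * w ‖y‖) := by linarith [hgrowth _ hy]
    _ ≤ 4 * K * w ‖y‖ * ‖x - y‖ := by nlinarith [mul_nonneg hK (hw ‖y‖)]

lemma norm_radialMap_sub_le_of_le_two_mul (hA : 0 ≤ A) (hK : 0 ≤ K) (hw : ∀ t, 0 ≤ w t)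
    (hφ : ∀ t > 0, 0 ≤ φ t) (hgrowth : ∀ t > 0, φ t ≤ K * t * w t)
    (hlip : ∀ b c, 0 < b → b ≤ c → c ≤ 2 * b → |φ c - φ b| ≤ A * w c * (c - b))
    {x y : V} (hx : 0 < ‖x‖) (hxy : ‖x‖ ≤ ‖y‖) (hyx : ‖y‖ ≤ 2 * ‖x‖) :
    ‖radialMap φ x - radialMap φ y‖ ≤ (A + 2 * K) * w ‖y‖ * ‖x - y‖ := by
  set b := ‖x‖
  set c := ‖y‖
  have hc : 0 < c := hx.trans_le hxy
  have hcb : c - b ≤ ‖x - y‖ := by linarith [norm_sub_norm_le y x, norm_sub_rev y x]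
  have hsplit : radialMap φ x - radialMap φ y
      = (φ c / c) • (x - y) + (φ b / b - φ c / c) • x := by
    simp only [radialMap]; module
  have hfirst : |φ c / c| ≤ K * w c := by
    rw [abs_of_nonneg (div_nonneg (hφ c hc) hc.le), div_le_iff₀ hc]
    linarith [hgrowth c hc]
  have hsecond : |φ b / b - φ c / c| * b ≤ (A + K) * w c * (c - b) := by
    have hexp : (φ b / b - φ c / c) * b = -(φ c - φ b) + φ c / c * (c - b) := by
      field_simp; ring
    calc |φ b / b - φ c / c| * b = |-(φ c - φ b) + φ c / c * (c - b)| := by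
          rw [← hexp, abs_mul, abs_of_pos hx]
      _ ≤ |φ c - φ b| + |φ c / c| * (c - b) := (abs_add_le _ _).trans_eq <| by
          rw [abs_neg, abs_mul, abs_of_nonneg (sub_nonneg.mpr hxy)]
      _ ≤ A * w c * (c - b) + K * w c * (c - b) := by
          gcongr
          exact hlip b c hx hxy hyx
      _ = (A + K) * w c * (c - b) := by ring
  calc ‖radialMap φ x - radialMap φ y‖
      ≤ |φ c / c| * ‖x - y‖ + |φ b / b - φ c / c| * b := by
        rw [hsplit]
        refine (norm_add_le _ _).trans_eq ?_
        rw [norm_smul, norm_smul, Real.norm_eq_abs, Real.norm_eq_abs]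
    _ ≤ K * w c * ‖x - y‖ + (A + K) * w c * ‖x - y‖ := by
        have hAKw : 0 ≤ (A + K) * w c := mul_nonneg (by linarith) (hw c)
        exact add_le_add (mul_le_mul_of_nonneg_right hfirst (norm_nonneg _))
          (hsecond.trans (mul_le_mul_of_nonneg_left hcb hAKw))
    _ = (A + 2 * K) * w c * ‖x - y‖ := by ring

lemma norm_radialMap_sub_le (hA : 0 ≤ A) (hK : 0 ≤ K) (hw : ∀ t, 0 ≤ w t)
    (hφ : ∀ t > 0, 0 ≤ φ t) (hmono : MonotoneOn φ (Ioi 0)) (hgrowth : ∀ t > 0, φ t ≤ K * t * w t)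
    (hlip : ∀ b c, 0 < b → b ≤ c → c ≤ 2 * b → |φ c - φ b| ≤ A * w c * (c - b)) (x y : V) :
    ‖radialMap φ x - radialMap φ y‖ ≤ (A + 4 * K) * w (max ‖x‖ ‖y‖) * ‖x - y‖ := by
  wlog hxy : ‖x‖ ≤ ‖y‖ generalizing x y
  · rw [norm_sub_rev, max_comm, norm_sub_rev x]
    exact this y x (le_of_not_ge hxy)
  rw [max_eq_right hxy]
  have hAw : 0 ≤ A * w ‖y‖ := mul_nonneg hA (hw _)
  have hKw : 0 ≤ K * w ‖y‖ := mul_nonneg hK (hw _)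
  rcases (norm_nonneg y).eq_or_lt with hy | hy
  · obtain rfl : y = 0 := norm_eq_zero.mp hy.symm
    obtain rfl : x = 0 := norm_eq_zero.mp (le_antisymm (hy ▸ hxy) (norm_nonneg x))
    simp [radialMap]
  rcases le_or_gt ‖y‖ (2 * ‖x‖) with hnear | hfar
  · refine (norm_radialMap_sub_le_of_le_two_mul hA hK hw hφ hgrowth hlip (by linarith) hxy
      hnear).trans (mul_le_mul_of_nonneg_right ?_ (norm_nonneg _))
    linarith
  · refine (norm_radialMap_sub_le_of_two_mul_le hK hw hφ hmono hgrowth hy hfar.le).trans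
      (mul_le_mul_of_nonneg_right ?_ (norm_nonneg _))
    linarith

end Radial

lemma hasDerivAt_smul_const_self {V : Type*} [NormedAddCommGroup V] [NormedSpace ℝ V] (v : V)
    (s : ℝ) : HasDerivAt (fun u : ℝ => u • v) v s := by
  simpa using (hasDerivAt_id s).smul_const v

section Potential

variable {n : ℕ} {F : ℝ → ℝ}

lemma differentiableOn_deriv_of_contDiffOn (hF : ContDiffOn ℝ 2 F (Ici 0)) :
    DifferentiableOn ℝ (deriv F) (Ioi 0) :=
  ((hF.mono Ioi_subset_Ici_self).deriv_of_isOpen isOpen_Ioi (m := 1) (by norm_num)).differentiableOn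
    one_ne_zero

lemma contDiffAt_inducedPot (hF : ContDiffOn ℝ 2 F (Ici 0)) {X : Fin n → Fin n → ℝ}
    (hX : X ≠ 0) : ContDiffAt ℝ 2 (inducedPot F) X := by
  have hX' : frobEquiv n X ≠ 0 := by simpa using hX
  have hF' : ContDiffAt ℝ 2 F ‖frobEquiv n X‖ :=
    hF.contDiffAt (Ici_mem_nhds (norm_pos_iff.mpr hX'))
  have hΦ : inducedPot F = F ∘ norm ∘ frobEquiv n :=
    funext fun Y => by simp [inducedPot, frobNorm_eq_norm]
  rw [hΦ]
  exact hF'.comp X ((contDiffAt_norm ℝ hX').comp X (frobEquiv n).contDiff.contDiffAt)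

lemma inducedPot_smul {E : Fin n → Fin n → ℝ} (hE : frobNorm E = 1) (s : ℝ) :
    inducedPot F (s • E) = F |s| := by
  rw [inducedPot, frobNorm_smul, hE, mul_one]

lemma fderiv_inducedPot_smul_apply (hF : ContDiffOn ℝ 2 F (Ici 0)) {E : Fin n → Fin n → ℝ}
    (hE : frobNorm E = 1) {s : ℝ} (hs : 0 < s) :
    fderiv ℝ (inducedPot F) (s • E) E = deriv F s := by
  have hsE : s • E ≠ 0 := smul_ne_zero hs.ne' (ne_zero_of_frobNorm_eq_one hE)
  have hdiff : DifferentiableAt ℝ (inducedPot F) (s • E) :=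
    (contDiffAt_inducedPot hF hsE).differentiableAt (by norm_num)
  have h1 := hdiff.hasFDerivAt.comp_hasDerivAt s (hasDerivAt_smul_const_self E s)
  have h2 : HasDerivAt (fun u : ℝ => inducedPot F (u • E)) (deriv F s) s := by
    simp only [inducedPot_smul hE]
    refine ((hF.contDiffAt (Ici_mem_nhds hs)).differentiableAt (by norm_num)).hasDerivAt
      |>.congr_of_eventuallyEq ?_
    filter_upwards [Ioi_mem_nhds hs] with u hu using by rw [abs_of_pos hu]
  exact h1.unique h2

lemma iteratedFDeriv_inducedPot_smul (hF : ContDiffOn ℝ 2 F (Ici 0)) {E : Fin n → Fin n → ℝ}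
    (hE : frobNorm E = 1) {s : ℝ} (hs : 0 < s) :
    iteratedFDeriv ℝ 2 (inducedPot F) (s • E) ![E, E] = deriv (deriv F) s := by
  have hsE : s • E ≠ 0 := smul_ne_zero hs.ne' (ne_zero_of_frobNorm_eq_one hE)
  have hdiff : DifferentiableAt ℝ (fderiv ℝ (inducedPot F)) (s • E) :=
    ((contDiffAt_inducedPot hF hsE).fderiv_right (m := 1) (by norm_num)).differentiableAt
      one_ne_zero
  have h1 := hdiff.hasFDerivAt.comp_hasDerivAt s (hasDerivAt_smul_const_self E s)
  have h1' := h1.clm_apply (hasDerivAt_const s E)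
  have h2 : HasDerivAt (fun u : ℝ => fderiv ℝ (inducedPot F) (u • E) E) (deriv (deriv F) s) s := by
    refine ((differentiableOn_deriv_of_contDiffOn hF).differentiableAt (Ioi_mem_nhds hs)).hasDerivAt
      |>.congr_of_eventuallyEq ?_
    filter_upwards [Ioi_mem_nhds hs] with u hu using fderiv_inducedPot_smul_apply hF hE hu
  have h3 := h1'.unique h2
  simp only [Function.comp_apply, map_zero, add_zero] at h3
  rw [iteratedFDeriv_two_apply]
  exact h3

lemma frobEquiv_stress (F : ℝ → ℝ) (B : Fin n → Fin n → ℝ) :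
    frobEquiv n (stress F B) = radialMap (deriv F) (frobEquiv n B) := by
  rcases eq_or_ne B 0 with rfl | hB
  · simp [stress, radialMap]
  · rw [stress, if_neg hB, map_smul, radialMap, frobNorm_eq_norm]

end Potential

namespace IsPPotential

variable {n : ℕ} {p γ₁ γ₂ : ℝ} {F : ℝ → ℝ}

lemma le_deriv_deriv (hP : IsPPotential n p γ₁ γ₂ F) (hn : 1 ≤ n) {t : ℝ} (ht : 0 < t) :
    γ₁ * (1 + t ^ 2) ^ ((p - 2) / 2) ≤ deriv (deriv F) t := by
  obtain ⟨E, hEs, hE⟩ := exists_isSymmMat_frobNorm_eq_one hn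
  simpa [iteratedFDeriv_inducedPot_smul hP.smooth hE ht, frobNorm_smul, hE, abs_of_pos ht]
    using hP.lower (t • E) E (hEs.smul t) hEs

lemma abs_deriv_deriv_le (hP : IsPPotential n p γ₁ γ₂ F) (hn : 1 ≤ n) {t : ℝ} (ht : 0 < t) :
    |deriv (deriv F) t| ≤ γ₂ * (1 + t ^ 2) ^ ((p - 2) / 2) := by
  obtain ⟨E, hEs, hE⟩ := exists_isSymmMat_frobNorm_eq_one hn
  simpa [iteratedFDeriv_inducedPot_smul hP.smooth hE ht, frobNorm_smul, hE, abs_of_pos ht]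
    using hP.upper (t • E) E E (hEs.smul t) hEs hEs

lemma tendsto_deriv_nhdsGT_zero (hP : IsPPotential n p γ₁ γ₂ F) (hn : 1 ≤ n) :
    Tendsto (deriv F) (𝓝[>] 0) (𝓝 0) := by
  obtain ⟨E, hEs, hE⟩ := exists_isSymmMat_frobNorm_eq_one hn
  have hmin : IsLocalMin (inducedPot (n := n) F) 0 := Eventually.of_forall fun X => by
    simpa [inducedPot, frobNorm_zero, hP.zero] using hP.nonneg _ (frobNorm_nonneg X)
  have hdiff : DifferentiableAt ℝ (fderiv ℝ (inducedPot (n := n) F)) 0 := by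
    by_contra h
    have := hP.lower 0 E (fun _ _ => rfl) hEs
    rw [iteratedFDeriv_two_apply, fderiv_zero_of_not_differentiableAt h] at this
    simp [hE, frobNorm_eq_norm] at this
    linarith [hP.gamma₁_pos]
  have hcont : Tendsto (fun s : ℝ => fderiv ℝ (inducedPot F) (s • E) E) (𝓝 0) (𝓝 0) := by
    have hline : Tendsto (fun s : ℝ => s • E) (𝓝 0) (𝓝 0) := by
      simpa using (hasDerivAt_smul_const_self E 0).continuousAt.tendsto
    have h := ((ContinuousLinearMap.apply ℝ ℝ E).continuous.tendsto _).comp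
      (hdiff.continuousAt.tendsto.comp hline)
    rwa [hmin.fderiv_eq_zero, map_zero] at h
  refine (hcont.mono_left nhdsWithin_le_nhds).congr' ?_
  filter_upwards [self_mem_nhdsWithin] with s hs using fderiv_inducedPot_smul_apply hP.smooth hE hs

lemma monotoneOn_deriv (hP : IsPPotential n p γ₁ γ₂ F) (hn : 1 ≤ n) :
    MonotoneOn (deriv F) (Ioi 0) := by
  have hd := differentiableOn_deriv_of_contDiffOn hP.smooth
  refine monotoneOn_of_deriv_nonneg (convex_Ioi 0) hd.continuousOn (by rwa [interior_Ioi]) ?_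
  rw [interior_Ioi]
  intro t ht
  exact (mul_nonneg hP.gamma₁_pos.le (by positivity)).trans (hP.le_deriv_deriv hn ht)

lemma deriv_nonneg (hP : IsPPotential n p γ₁ γ₂ F) (hn : 1 ≤ n) {t : ℝ} (ht : 0 < t) :
    0 ≤ deriv F t :=
  le_of_tendsto (hP.tendsto_deriv_nhdsGT_zero hn) <| eventually_of_mem (Ioo_mem_nhdsGT ht)
    fun _ hs => hP.monotoneOn_deriv hn hs.1 ht hs.2.le

lemma deriv_le (hP : IsPPotential n p γ₁ γ₂ F) (hn : 1 ≤ n) (hp : 1 < p) {t : ℝ} (ht : 0 < t) :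
    deriv F t ≤ p / (p - 1) * t * (γ₂ * (1 + t ^ 2) ^ ((p - 2) / 2)) :=
  le_of_deriv_le_one_add_sq_rpow hp hP.gamma₂_pos.le
    (differentiableOn_deriv_of_contDiffOn hP.smooth) (hP.tendsto_deriv_nhdsGT_zero hn)
    (fun _ hs => (le_abs_self _).trans (hP.abs_deriv_deriv_le hn hs)) ht

lemma abs_deriv_sub_deriv_le (hP : IsPPotential n p γ₁ γ₂ F) (hn : 1 ≤ n) {b c : ℝ} (hb : 0 < b)
    (hbc : b ≤ c) (hcb : c ≤ 2 * b) :
    |deriv F c - deriv F b| ≤ 4 ^ |(p - 2) / 2| * (γ₂ * (1 + c ^ 2) ^ ((p - 2) / 2)) * (c - b) := by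
  have hbound : ∀ s ∈ Icc b c,
      ‖deriv (deriv F) s‖ ≤ 4 ^ |(p - 2) / 2| * (γ₂ * (1 + c ^ 2) ^ ((p - 2) / 2)) := by
    intro s hs
    have hs0 : 0 < s := hb.trans_le hs.1
    rw [Real.norm_eq_abs, mul_left_comm]
    exact (hP.abs_deriv_deriv_le hn hs0).trans <| mul_le_mul_of_nonneg_left
      (one_add_sq_rpow_le_of_le_two_mul hs0.le hs.2 (by linarith [hs.1])) hP.gamma₂_pos.le
  have := (convex_Icc b c).norm_image_sub_le_of_norm_deriv_le
    (fun s hs => (differentiableOn_deriv_of_contDiffOn hP.smooth).differentiableAt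
      (Ioi_mem_nhds (hb.trans_le hs.1))) hbound ⟨le_rfl, hbc⟩ ⟨hbc, le_rfl⟩
  rwa [Real.norm_eq_abs, Real.norm_eq_abs, abs_of_nonneg (sub_nonneg.mpr hbc)] at this

end IsPPotential

/-- Local Lipschitz continuity of the extra stress: there is `c₂ > 0` depending only on `n`
and `p` (independent of `γ₁, γ₂`) such that for every `p`-potential `F` and all symmetric
`B, C`, `|S(B) - S(C)| ≤ c₂ γ₂ (1 + |B|² + |C|²)^((p-2)/2) |B - C|`. -/
theorem stress_lipschitz (n : ℕ) (hn : 1 ≤ n) (p : ℝ) (hp : 1 < p) :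
    ∃ c₂ : ℝ, 0 < c₂ ∧ ∀ (γ₁ γ₂ : ℝ) (F : ℝ → ℝ), IsPPotential n p γ₁ γ₂ F →
      ∀ B C : Fin n → Fin n → ℝ, IsSymmMat B → IsSymmMat C →
        frobNorm (stress F B - stress F C) ≤
          c₂ * γ₂ * (1 + frobNorm B ^ 2 + frobNorm C ^ 2) ^ ((p - 2) / 2)
            * frobNorm (B - C) := by
  have hK : 0 < p / (p - 1) := div_pos (by linarith) (by linarith)
  have hA : 0 < (4 : ℝ) ^ |(p - 2) / 2| := by positivity
  refine ⟨2 ^ |(p - 2) / 2| * (4 ^ |(p - 2) / 2| + 4 * (p / (p - 1))), by positivity, ?_⟩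
  intro γ₁ γ₂ F hP B C _ _
  have hγ₂ := hP.gamma₂_pos
  have hrad := norm_radialMap_sub_le hA.le hK.le (fun _ => by positivity)
    (fun _ => hP.deriv_nonneg hn) (hP.monotoneOn_deriv hn) (fun _ => hP.deriv_le hn hp)
    (fun _ _ => hP.abs_deriv_sub_deriv_le hn) (frobEquiv n B) (frobEquiv n C)
  rw [← map_sub, ← frobEquiv_stress, ← frobEquiv_stress, ← map_sub] at hrad
  simp only [← frobNorm_eq_norm] at hrad
  refine hrad.trans ?_
  have hmax := one_add_max_sq_rpow_le (q := (p - 2) / 2) (frobNorm_nonneg B) (frobNorm_nonneg C)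
  calc _ = (4 ^ |(p - 2) / 2| + 4 * (p / (p - 1))) * γ₂ * frobNorm (B - C)
        * (1 + max (frobNorm B) (frobNorm C) ^ 2) ^ ((p - 2) / 2) := by ring
    _ ≤ (4 ^ |(p - 2) / 2| + 4 * (p / (p - 1))) * γ₂ * frobNorm (B - C)
        * (2 ^ |(p - 2) / 2| * (1 + frobNorm B ^ 2 + frobNorm C ^ 2) ^ ((p - 2) / 2)) := by
      have := frobNorm_nonneg (B - C)
      gcongr
    _ = _ := by ring
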